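/- arXiv:1607.02873 — 3 statements merged into one kernel-verified Lean document; each statement's English description precedes it below -/
import Mathlib

section
/- Let I be a finitely generated ideal of the ring R = ℂ⟦z₁,…,z_m⟧ of formal power series, and let Ĩ be the ideal of ℂ⟦x₁,…,x_n,z₁,…,z_m⟧ generated by the image of I under the canonical inclusion R → ℂ⟦x,z⟧. Write f ∈ ℂ⟦x,z⟧ as f = Σ_α a_α x^α with coefficients a_α ∈ R (a_α is the coefficient of the monomial x^α when f is viewed as a power series in the x-variables over R). Then f ∈ Ĩ if and only if a_α ∈ I for every multi-index α. -/
/-!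
The inclusion `Ĩ ⊆ {f | every coefficient of f lies in I}` holds for any ideal, because the
right-hand side is an ideal containing `C '' I`. Conversely, if `I` is spanned by finitely many
`g`, write each coefficient as `coeff α f = Σ_g c_{α,g} g`; collecting the coefficients
`c_{α,g}` over all `α` into power series `φ_g` gives `f = Σ_g φ_g · C g ∈ Ĩ`. Finiteness of
the generating set is what makes this a finite sum.
-/

namespace MvPowerSeries

variable (σ : Type*) {R : Type*} [Semiring R]

def coeffsInIdeal (I : Ideal R) : Ideal (MvPowerSeries σ R) where
  carrier := {f | ∀ α, coeff α f ∈ I}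
  zero_mem' α := by simp
  add_mem' hf hg α := by simpa only [map_add] using I.add_mem (hf α) (hg α)
  smul_mem' a f hf α := by
    classical
    rw [smul_eq_mul, coeff_mul]
    exact I.sum_mem fun p _ => I.mul_mem_left _ (hf p.2)

variable {σ}

theorem mem_coeffsInIdeal {I : Ideal R} {f : MvPowerSeries σ R} :
    f ∈ coeffsInIdeal σ I ↔ ∀ α, coeff α f ∈ I :=
  Iff.rfl

theorem map_C_le_coeffsInIdeal (I : Ideal R) : I.map C ≤ coeffsInIdeal σ I := by
  classical
  refine Ideal.map_le_iff_le_comap.2 fun r hr α => ?_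
  rw [coeff_C]
  split_ifs
  exacts [hr, I.zero_mem]

theorem coeffsInIdeal_span_le_map_C (S : Finset R) :
    coeffsInIdeal σ (Ideal.span S) ≤ (Ideal.span (S : Set R)).map C := by
  intro f hf
  choose c hc using fun α => Submodule.mem_span_finset'.1 (hf α)
  let φ : S → MvPowerSeries σ R := fun g α => c α g
  have hf_eq : f = ∑ g : S, φ g * C g.1 := by
    ext α
    simp only [map_sum, coeff_mul_C, ← hc α, smul_eq_mul]
    rfl
  rw [hf_eq]
  exact Ideal.sum_mem _ fun g _ =>
    Ideal.mul_mem_left _ _ (Ideal.mem_map_of_mem _ (Ideal.subset_span g.2))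

theorem map_C_eq_coeffsInIdeal {I : Ideal R} (hI : I.FG) : I.map C = coeffsInIdeal σ I := by
  obtain ⟨S, rfl⟩ := hI
  exact (map_C_le_coeffsInIdeal _).antisymm (coeffsInIdeal_span_le_map_C S)

end MvPowerSeries

/-- Let `I` be a finitely generated ideal of `R = ℂ⟦z₁,…,z_m⟧` and let `Ĩ` be the
ideal of `ℂ⟦x₁,…,x_n,z₁,…,z_m⟧` (identified with the ring of formal power series in the
`x`-variables with coefficients in `R`) generated by the image of `I`. Writing
`f = Σ_α a_α x^α` with `a_α ∈ R`, one has `f ∈ Ĩ` if and only if `a_α ∈ I` for every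
multi-index `α`. -/
theorem mem_ideal_map_C_iff_coeff_mem
    (n m : ℕ) (I : Ideal (MvPowerSeries (Fin m) ℂ)) (hI : I.FG)
    (f : MvPowerSeries (Fin n) (MvPowerSeries (Fin m) ℂ)) :
    f ∈ I.map (MvPowerSeries.C (σ := Fin n) (R := MvPowerSeries (Fin m) ℂ)) ↔
      ∀ α : Fin n →₀ ℕ, MvPowerSeries.coeff (R := MvPowerSeries (Fin m) ℂ) α f ∈ I := by
  rw [MvPowerSeries.map_C_eq_coeffsInIdeal hI, MvPowerSeries.mem_coeffsInIdeal]
end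

section
/- Let I be a finitely generated ideal of R = ℂ⟦z₁,…,z_m⟧ and let Ĩ be the ideal of ℂ⟦x₁,…,x_n,z₁,…,z_m⟧ generated by the image of I. Let a₁,…,a_{n−1} ∈ ℂ⟦x,z⟧ and let b, β₀ ∈ Ĩ with ∂β₀/∂x_n = 0. If β ∈ ℂ⟦x,z⟧ satisfies ∂β/∂x_n − Σ_{i=1}^{n−1} a_i ∂β/∂x_i = b and β − β₀ lies in the ideal generated by x_n, then β ∈ Ĩ. -/
/-- The formal partial derivative `∂/∂x_i` on a multivariate formal power series ring. -/
noncomputable def mvDeriv {σ R : Type*} [CommRing R] (i : σ)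
    (f : MvPowerSeries σ R) : MvPowerSeries σ R :=
  fun α => (α i + 1 : ℕ) • MvPowerSeries.coeff (R := R) (α + Finsupp.single i 1) f

/-! Induction on the `x_n`-degree of the coefficients of `β`: comparing the coefficients of
`x^α` in the equation expresses `(α_n + 1)` times the coefficient of `x^α x_n` in `β` through
`b` and coefficients of `β` of `x_n`-degree at most `α_n`, since the derivatives `∂/∂xᵢ` with
`i ≠ n` do not change the `x_n`-degree. The initial condition puts the coefficients of
`x_n`-degree `0` into `I`, and finite generation of `I` turns "all coefficients in `I`" into
membership in `Ĩ`. -/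

theorem Ideal.mem_of_succ_nsmul_mem {R : Type*} [CommRing R] [Algebra ℚ R] (I : Ideal R)
    {x : R} (k : ℕ) (h : (k + 1) • x ∈ I) : x ∈ I := by
  have hx : x = ((k + 1 : ℕ) : ℚ)⁻¹ • (k + 1) • x := by
    rw [← Nat.cast_smul_eq_nsmul ℚ, smul_smul,
      inv_mul_cancel₀ (Nat.cast_ne_zero.2 k.succ_ne_zero), one_smul]
  rw [hx]
  exact Submodule.smul_of_tower_mem _ _ h

namespace MvPowerSeries

variable {σ R : Type*} [CommRing R] {I : Ideal R}

theorem coeff_mem_of_mem_map_C {f : MvPowerSeries σ R} (hf : f ∈ I.map (C (σ := σ)))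
    (α : σ →₀ ℕ) : coeff α f ∈ I := by
  have hker : I.map (C (σ := σ)) ≤ RingHom.ker (map (σ := σ) (Ideal.Quotient.mk I)) :=
    Ideal.map_le_iff_le_comap.2 fun r hr => by
      simp [map_C, Ideal.Quotient.eq_zero_iff_mem.2 hr]
  have hα := congrArg (coeff α) (RingHom.mem_ker.1 (hker hf))
  rwa [coeff_map, map_zero, Ideal.Quotient.eq_zero_iff_mem] at hα

theorem mem_map_C_of_coeff_mem (hI : I.FG) {f : MvPowerSeries σ R}
    (hf : ∀ α, coeff α f ∈ I) : f ∈ I.map (C (σ := σ)) := by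
  classical
  obtain ⟨S, rfl⟩ := hI
  have hc : ∀ α, ∃ c : R → R, ∑ g ∈ S, c g * g = coeff α f := fun α => by
    obtain ⟨c, -, hc⟩ := Submodule.mem_span_finset.1 (hf α)
    exact ⟨c, hc⟩
  choose c hc using hc
  have hf_eq : f = ∑ g ∈ S, (show MvPowerSeries σ R from fun α => c α g) * C g := by
    ext α
    rw [map_sum, ← hc α]
    refine Finset.sum_congr rfl fun g _ => ?_
    rw [coeff_mul_C]
    rfl
  rw [hf_eq]
  exact Ideal.sum_mem _ fun g hg =>
    Ideal.mul_mem_left _ _ (Ideal.mem_map_of_mem _ (Ideal.subset_span hg))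

theorem coeff_mvDeriv (i : σ) (f : MvPowerSeries σ R) (α : σ →₀ ℕ) :
    coeff α (mvDeriv i f) = (α i + 1) • coeff (α + Finsupp.single i 1) f :=
  rfl

theorem coeff_mul_mvDeriv_mem {s t : σ} (hts : t ≠ s) {k : ℕ} {β : MvPowerSeries σ R}
    (hβ : ∀ γ : σ →₀ ℕ, γ s < k → coeff γ β ∈ I) (a : MvPowerSeries σ R) {α : σ →₀ ℕ}
    (hα : α s < k) : coeff α (a * mvDeriv t β) ∈ I := by
  classical
  rw [coeff_mul]
  refine Ideal.sum_mem _ fun p hp => I.mul_mem_left _ ?_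
  have hp_le : p.2 s ≤ α s := by
    rw [← Finset.HasAntidiagonal.mem_antidiagonal.1 hp, Finsupp.add_apply]
    omega
  rw [coeff_mvDeriv]
  refine Submodule.smul_of_tower_mem _ _ (hβ _ ?_)
  rw [Finsupp.add_apply, Finsupp.single_eq_of_ne hts.symm]
  omega

theorem coeff_mem_of_mvDeriv_sub_sum_mem {ι : Type*} [Fintype ι] [Algebra ℚ R] {s : σ}
    {t : ι → σ} (hts : ∀ i, t i ≠ s) (a : ι → MvPowerSeries σ R) {β : MvPowerSeries σ R}
    (hinit : ∀ α : σ →₀ ℕ, α s = 0 → coeff α β ∈ I)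
    (heq : ∀ α, coeff α (mvDeriv s β - ∑ i, a i * mvDeriv (t i) β) ∈ I)
    (α : σ →₀ ℕ) : coeff α β ∈ I := by
  suffices h : ∀ k, ∀ α : σ →₀ ℕ, α s < k → coeff α β ∈ I from h _ α (Nat.lt_succ_self _)
  intro k
  induction k with
  | zero => exact fun α hα => absurd hα (Nat.not_lt_zero _)
  | succ k ih =>
    intro α hα
    obtain hα0 | hα_pos := Nat.eq_zero_or_pos (α s)
    · exact hinit α hα0
    obtain ⟨α', rfl⟩ : ∃ α', α = α' + Finsupp.single s 1 :=
      ⟨α - Finsupp.single s 1, (tsub_add_cancel_of_le (Finsupp.single_le_iff.2 hα_pos)).symm⟩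
    have hα' : α' s < k := by
      simp only [Finsupp.add_apply, Finsupp.single_eq_same] at hα
      omega
    have hsum : coeff α' (∑ i, a i * mvDeriv (t i) β) ∈ I := by
      rw [map_sum]
      exact Ideal.sum_mem _ fun i _ => coeff_mul_mvDeriv_mem (hts i) ih (a i) hα'
    have hderiv : (α' s + 1) • coeff (α' + Finsupp.single s 1) β ∈ I := by
      rw [← coeff_mvDeriv, ← sub_add_cancel (mvDeriv s β) (∑ i, a i * mvDeriv (t i) β),
        map_add]
      exact I.add_mem (heq α') hsum
    exact I.mem_of_succ_nsmul_mem _ hderiv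

end MvPowerSeries

open MvPowerSeries

theorem solution_of_cauchy_problem_mem_ideal_map_C_general
    (n m : ℕ) (I : Ideal (MvPowerSeries (Fin m) ℂ)) (hI : I.FG)
    (a : Fin n → MvPowerSeries (Fin (n + 1)) (MvPowerSeries (Fin m) ℂ))
    (b β₀ β : MvPowerSeries (Fin (n + 1)) (MvPowerSeries (Fin m) ℂ))
    (hb : b ∈ I.map (MvPowerSeries.C (σ := Fin (n + 1)) (R := MvPowerSeries (Fin m) ℂ)))
    (hβ₀ : β₀ ∈ I.map (MvPowerSeries.C (σ := Fin (n + 1)) (R := MvPowerSeries (Fin m) ℂ)))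
    (heq : mvDeriv (Fin.last n) β - ∑ i : Fin n, a i * mvDeriv i.castSucc β = b)
    (hinit : β - β₀ ∈ Ideal.span
      {MvPowerSeries.X (R := MvPowerSeries (Fin m) ℂ) (Fin.last n)}) :
    β ∈ I.map (MvPowerSeries.C (σ := Fin (n + 1)) (R := MvPowerSeries (Fin m) ℂ)) := by
  have hβ_init : ∀ α : Fin (n + 1) →₀ ℕ, α (Fin.last n) = 0 → coeff α β = coeff α β₀ :=
    fun α hα => sub_eq_zero.1 <| by
      rw [← map_sub]
      exact X_dvd_iff.1 (Ideal.mem_span_singleton.1 hinit) α hα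
  refine mem_map_C_of_coeff_mem hI <|
    coeff_mem_of_mvDeriv_sub_sum_mem (fun i => (Fin.castSucc_lt_last i).ne) a ?_ ?_
  · exact fun α hα => hβ_init α hα ▸ coeff_mem_of_mem_map_C hβ₀ α
  · exact fun α => heq ▸ coeff_mem_of_mem_map_C hb α

/-- Let `I` be a finitely generated ideal of `R = ℂ⟦z₁,…,z_m⟧` and let `Ĩ` be the
ideal of `ℂ⟦x₁,…,x_n,z₁,…,z_m⟧` generated by the image of `I` (here the `x`-variables are
indexed by `Fin (n+1)`, the last one playing the role of `x_n`, and `ℂ⟦x,z⟧` is identified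
with the ring of formal power series in the `x`-variables with coefficients in `R`).
Let `a₁,…,a_{n−1} ∈ ℂ⟦x,z⟧`, `b, β₀ ∈ Ĩ` with `∂β₀/∂x_n = 0`.  If `β` satisfies
`∂β/∂x_n − Σᵢ aᵢ ∂β/∂xᵢ = b` and `β − β₀ ∈ (x_n)`, then `β ∈ Ĩ`. -/
theorem solution_of_cauchy_problem_mem_ideal_map_C
    (n m : ℕ) (I : Ideal (MvPowerSeries (Fin m) ℂ)) (hI : I.FG)
    (a : Fin n → MvPowerSeries (Fin (n + 1)) (MvPowerSeries (Fin m) ℂ))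
    (b β₀ β : MvPowerSeries (Fin (n + 1)) (MvPowerSeries (Fin m) ℂ))
    (hb : b ∈ I.map (MvPowerSeries.C (σ := Fin (n + 1)) (R := MvPowerSeries (Fin m) ℂ)))
    (hβ₀ : β₀ ∈ I.map (MvPowerSeries.C (σ := Fin (n + 1)) (R := MvPowerSeries (Fin m) ℂ)))
    (hβ₀d : mvDeriv (Fin.last n) β₀ = 0)
    (heq : mvDeriv (Fin.last n) β - ∑ i : Fin n, a i * mvDeriv i.castSucc β = b)
    (hinit : β - β₀ ∈ Ideal.span
      {MvPowerSeries.X (R := MvPowerSeries (Fin m) ℂ) (Fin.last n)}) :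
    β ∈ I.map (MvPowerSeries.C (σ := Fin (n + 1)) (R := MvPowerSeries (Fin m) ℂ)) :=
  solution_of_cauchy_problem_mem_ideal_map_C_general n m I hI a b β₀ β hb hβ₀ heq hinit
end

section
/- (Formal Cauchy–Kowalevski theorem with parameters.) Let a₁,…,a_{n−1}, b ∈ ℂ⟦x₁,…,x_n,z₁,…,z_m⟧ and let g ∈ ℂ⟦x,z⟧ with ∂g/∂x_n = 0. Then there exists one and only one f ∈ ℂ⟦x,z⟧ such that ∂f/∂x_n + Σ_{i=1}^{n−1} a_i ∂f/∂x_i = b and f − g lies in the ideal generated by x_n. -/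
open Finsupp

theorem mvDeriv_eq_pderiv {σ R : Type*} [CommRing R] (i : σ) (f : MvPowerSeries σ R) :
    mvDeriv i f = MvPowerSeries.pderiv R i f := by
  ext α
  rw [MvPowerSeries.coeff_pderiv, mul_comm, ← Nat.cast_succ, ← nsmul_eq_mul]
  rfl

namespace MvPowerSeries

variable {σ R : Type*}

section FixedPoint

variable [Ring R] {t : σ}

theorem coeff_eq_of_X_pow_dvd_sub {k : ℕ} {f f' : MvPowerSeries σ R} (h : X t ^ k ∣ f - f')
    {α : σ →₀ ℕ} (hα : α t < k) : coeff α f = coeff α f' :=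
  sub_eq_zero.mp <| map_sub (coeff α) f f' ▸ X_pow_dvd_iff.mp h α hα

theorem eq_of_fixedPoint_of_X_pow_dvd_sub {T : MvPowerSeries σ R → MvPowerSeries σ R}
    (hT : ∀ k f f', X t ^ k ∣ f - f' → X t ^ (k + 1) ∣ T f - T f') {f f' : MvPowerSeries σ R}
    (hf : T f = f) (hf' : T f' = f') : f = f' := by
  have close : ∀ k, X t ^ k ∣ f - f' := by
    intro k
    induction k with
    | zero => simp
    | succ k ih => rw [← hf, ← hf']; exact hT _ _ _ ih
  ext α
  exact coeff_eq_of_X_pow_dvd_sub (close (α t + 1)) (lt_add_one _)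

theorem existsUnique_fixedPoint_of_X_pow_dvd_sub (T : MvPowerSeries σ R → MvPowerSeries σ R)
    (hT : ∀ k f f', X t ^ k ∣ f - f' → X t ^ (k + 1) ∣ T f - T f') :
    ∃! f, T f = f := by
  have iterate : ∀ k j, X t ^ k ∣ T^[k + j] 0 - T^[k] 0 := by
    intro k
    induction k with
    | zero => simp
    | succ k ih =>
      intro j
      rw [add_right_comm, Function.iterate_succ_apply', Function.iterate_succ_apply']
      exact hT _ _ _ (ih j)
  let f : MvPowerSeries σ R := fun α => coeff α (T^[α t + 1] 0)
  have approx : ∀ k, X t ^ k ∣ T^[k] 0 - f := by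
    intro k
    refine X_pow_dvd_iff.mpr fun α hα => ?_
    obtain ⟨j, rfl⟩ := Nat.exists_eq_add_of_lt hα
    rw [map_sub, sub_eq_zero, add_right_comm]
    exact coeff_eq_of_X_pow_dvd_sub (iterate (α t + 1) j) (lt_add_one _)
  have hf : T f = f := by
    ext α
    rw [coeff_eq_of_X_pow_dvd_sub (hT _ _ _ (dvd_sub_comm.mp (approx (α t)))) (lt_add_one _),
      ← Function.iterate_succ_apply' T]
    rfl
  exact ⟨f, hf, fun f' hf' => eq_of_fixedPoint_of_X_pow_dvd_sub hT hf' hf⟩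

end FixedPoint

section Antiderivative

variable [CommRing R] [Algebra ℚ R] (t : σ)

theorem eq_zero_or_exists_eq_add_single (α : σ →₀ ℕ) : α t = 0 ∨ ∃ β, α = β + single t 1 := by
  refine (eq_or_ne (α t) 0).imp_right fun hα => ⟨α - single t 1, ?_⟩
  rw [tsub_add_cancel_of_le (single_le_iff.mpr (Nat.one_le_iff_ne_zero.mpr hα))]

theorem mul_natCast_add_one_eq_smul (c : R) (n : ℕ) : c * ((n : R) + 1) = ((n : ℚ) + 1) • c := by
  rw [mul_comm, ← Nat.cast_succ, ← nsmul_eq_mul, ← Nat.cast_smul_eq_nsmul ℚ, Nat.cast_succ]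

/-- The antiderivative of `h` in `x_t` that agrees with `g` on `x_t = 0`. -/
noncomputable def antideriv (g h : MvPowerSeries σ R) : MvPowerSeries σ R :=
  fun α => if α t = 0 then coeff α g else (α t : ℚ)⁻¹ • coeff (α - single t 1) h

variable {t} {g h : MvPowerSeries σ R}

theorem coeff_antideriv_of_eq_zero {α : σ →₀ ℕ} (hα : α t = 0) :
    coeff α (antideriv t g h) = coeff α g :=
  if_pos hα

theorem coeff_add_single_antideriv (β : σ →₀ ℕ) :
    coeff (β + single t 1) (antideriv t g h) = (β t + 1 : ℚ)⁻¹ • coeff β h := by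
  simp [antideriv, coeff_apply]

theorem pderiv_antideriv : pderiv R t (antideriv t g h) = h := by
  ext β
  rw [coeff_pderiv, coeff_add_single_antideriv, mul_natCast_add_one_eq_smul,
    smul_inv_smul₀ (by positivity)]

theorem X_dvd_antideriv_sub : X t ∣ antideriv t g h - g :=
  X_dvd_iff.mpr fun α hα => by rw [map_sub, coeff_antideriv_of_eq_zero hα, sub_self]

theorem pderiv_eq_and_X_dvd_sub_iff {f : MvPowerSeries σ R} :
    pderiv R t f = h ∧ X t ∣ f - g ↔ f = antideriv t g h := by
  refine ⟨fun ⟨hf, hfg⟩ => ?_, fun hf => hf ▸ ⟨pderiv_antideriv, X_dvd_antideriv_sub⟩⟩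
  ext α
  rcases eq_zero_or_exists_eq_add_single t α with hα | ⟨β, rfl⟩
  · rw [coeff_antideriv_of_eq_zero hα, ← sub_eq_zero, ← map_sub]
    exact X_dvd_iff.mp hfg α hα
  · rw [coeff_add_single_antideriv, ← hf, coeff_pderiv, mul_natCast_add_one_eq_smul,
      inv_smul_smul₀ (by positivity)]

theorem X_pow_succ_dvd_antideriv_sub {k : ℕ} {h' : MvPowerSeries σ R} (hh : X t ^ k ∣ h - h') :
    X t ^ (k + 1) ∣ antideriv t g h - antideriv t g h' := by
  refine X_pow_dvd_iff.mpr fun α hα => ?_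
  rw [map_sub, sub_eq_zero]
  rcases eq_zero_or_exists_eq_add_single t α with hα₀ | ⟨β, rfl⟩
  · rw [coeff_antideriv_of_eq_zero hα₀, coeff_antideriv_of_eq_zero hα₀]
  · rw [coeff_add_single_antideriv, coeff_add_single_antideriv,
      coeff_eq_of_X_pow_dvd_sub hh (by simpa using hα)]

end Antiderivative

section FirstOrderPDE

variable [CommRing R] {t : σ}

theorem X_pow_dvd_pderiv_of_ne {j : σ} (hj : j ≠ t) {k : ℕ} {f : MvPowerSeries σ R}
    (hf : X t ^ k ∣ f) : X t ^ k ∣ pderiv R j f := by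
  obtain ⟨q, rfl⟩ := hf
  rw [Derivation.leibniz, pderiv_pow, pderiv_X_of_ne hj.symm, mul_zero, smul_zero, add_zero]
  exact dvd_mul_right _ _

theorem existsUnique_pderiv_add_sum_mul_pderiv_eq [Algebra ℚ R] {ι : Type*} [Fintype ι]
    {v : ι → σ} (hv : ∀ i, v i ≠ t) (a : ι → MvPowerSeries σ R) (b g : MvPowerSeries σ R) :
    ∃! f, pderiv R t f + ∑ i, a i * pderiv R (v i) f = b ∧ X t ∣ f - g := by
  have fixedPoint_iff : ∀ f, (pderiv R t f + ∑ i, a i * pderiv R (v i) f = b ∧ X t ∣ f - g) ↔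
      antideriv t g (b - ∑ i, a i * pderiv R (v i) f) = f := by
    intro f
    rw [eq_comm (a := antideriv _ _ _), ← pderiv_eq_and_X_dvd_sub_iff, eq_sub_iff_add_eq]
  refine (existsUnique_congr fixedPoint_iff).mpr <|
    existsUnique_fixedPoint_of_X_pow_dvd_sub _ fun k f f' hff' => X_pow_succ_dvd_antideriv_sub ?_
  rw [sub_sub_sub_cancel_left, ← Finset.sum_sub_distrib]
  refine Finset.dvd_sum fun i _ => ?_
  rw [← mul_sub, ← map_sub]
  exact Dvd.dvd.mul_left (X_pow_dvd_pderiv_of_ne (hv i) (dvd_sub_comm.mp hff')) _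

end FirstOrderPDE

end MvPowerSeries

/-- The `x`-variables are indexed by `Fin (n + 1)`, with `Fin.last n` in the role of `x_n`, and
`ℂ⟦x,z⟧` is identified with `ℂ⟦z⟧⟦x⟧`. -/
theorem formal_cauchy_kowalevski_general
    (n m : ℕ)
    (a : Fin n → MvPowerSeries (Fin (n + 1)) (MvPowerSeries (Fin m) ℂ))
    (b g : MvPowerSeries (Fin (n + 1)) (MvPowerSeries (Fin m) ℂ)) :
    ∃! f : MvPowerSeries (Fin (n + 1)) (MvPowerSeries (Fin m) ℂ),
      mvDeriv (Fin.last n) f + ∑ i : Fin n, a i * mvDeriv i.castSucc f = b ∧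
      f - g ∈ Ideal.span
        {MvPowerSeries.X (R := MvPowerSeries (Fin m) ℂ) (Fin.last n)} := by
  simp only [mvDeriv_eq_pderiv, Ideal.mem_span_singleton]
  exact MvPowerSeries.existsUnique_pderiv_add_sum_mul_pderiv_eq
    (fun i => (Fin.castSucc_lt_last i).ne) a b g

/-- formal Cauchy–Kowalevski theorem with parameters:
Let `a₁,…,a_{n−1}, b ∈ ℂ⟦x₁,…,x_n,z₁,…,z_m⟧` and let `g` satisfy `∂g/∂x_n = 0`
(here the `x`-variables are indexed by `Fin (n+1)`, the last one playing the role of `x_n`,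
and `ℂ⟦x,z⟧` is identified with the ring of formal power series in the `x`-variables with
coefficients in `ℂ⟦z⟧`).  Then there is one and only one `f ∈ ℂ⟦x,z⟧` with
`∂f/∂x_n + Σᵢ aᵢ ∂f/∂xᵢ = b` and `f − g ∈ (x_n)`. -/
theorem formal_cauchy_kowalevski
    (n m : ℕ)
    (a : Fin n → MvPowerSeries (Fin (n + 1)) (MvPowerSeries (Fin m) ℂ))
    (b g : MvPowerSeries (Fin (n + 1)) (MvPowerSeries (Fin m) ℂ))
    (hg : mvDeriv (Fin.last n) g = 0) :
    ∃! f : MvPowerSeries (Fin (n + 1)) (MvPowerSeries (Fin m) ℂ),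
      mvDeriv (Fin.last n) f + ∑ i : Fin n, a i * mvDeriv i.castSucc f = b ∧
      f - g ∈ Ideal.span
        {MvPowerSeries.X (R := MvPowerSeries (Fin m) ℂ) (Fin.last n)} :=
  formal_cauchy_kowalevski_general n m a b g
end
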